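/- arXiv:0710.3887 — 2 statements merged into one kernel-verified Lean document; each statement's English description precedes it below -/
import Mathlib

section
/- Let A be an LI-ideal of an MTL-algebra L. Then A is an ultra LI-ideal of L if and only if A is both a prime proper LI-ideal and an ILI-ideal of L. -/
/-- An MTL-algebra: a residuated lattice (bounded lattice, commutative monoid
structure `tmul` with unit `⊤`, and residuum `himp` adjoint to `tmul`)
satisfying the pre-linearity equation `(x→y) ∨ (y→x) = 1`. -/
class MTLAlgebra (L : Type*) extends Lattice L, BoundedOrder L where
  tmul : L → L → L
  himp : L → L → L
  tmul_comm : ∀ x y : L, tmul x y = tmul y x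
  tmul_assoc : ∀ x y z : L, tmul (tmul x y) z = tmul x (tmul y z)
  top_tmul : ∀ x : L, tmul ⊤ x = x
  adjoint : ∀ x y z : L, z ≤ himp x y ↔ tmul z x ≤ y
  prelinearity : ∀ x y : L, himp x y ⊔ himp y x = ⊤

namespace MTLAlgebra

variable {L : Type*} [MTLAlgebra L]

/-- The negation `x' := x → 0`. -/
def neg (x : L) : L := himp x ⊥

/-- `A` is an LI-ideal of an MTL-algebra: `0 ∈ A` and `(x'→y')' ∈ A`
together with `x ∈ A` imply `y ∈ A`. -/
def IsLIIdeal (A : Set L) : Prop :=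
  (⊥ : L) ∈ A ∧ ∀ x y : L, neg (himp (neg x) (neg y)) ∈ A → x ∈ A → y ∈ A

end MTLAlgebra

open MTLAlgebra

namespace MTLAlgebra

variable {L : Type*} [MTLAlgebra L]

lemma le_himp {x y z : L} : z ≤ himp x y ↔ tmul z x ≤ y := adjoint x y z

lemma tmul_himp_le (x y : L) : tmul (himp x y) x ≤ y := le_himp.1 le_rfl

lemma tmul_mono_left {a b : L} (c : L) (h : a ≤ b) : tmul a c ≤ tmul b c :=
  le_himp.1 (h.trans (le_himp.2 le_rfl))

lemma tmul_mono_right {a b : L} (c : L) (h : a ≤ b) : tmul c a ≤ tmul c b := by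
  rw [tmul_comm c a, tmul_comm c b]; exact tmul_mono_left c h

lemma tmul_top (x : L) : tmul x ⊤ = x := by rw [tmul_comm, top_tmul]

lemma tmul_le_left (a b : L) : tmul a b ≤ a := by
  have := tmul_mono_right a (le_top (a := b)); rwa [tmul_top] at this

lemma tmul_le_right (a b : L) : tmul a b ≤ b := by
  rw [tmul_comm]; exact tmul_le_left b a

lemma top_himp (a : L) : himp ⊤ a = a := by
  apply le_antisymm
  · have := tmul_himp_le ⊤ a; rwa [tmul_top] at this
  · exact le_himp.2 (by rw [tmul_top])

lemma himp_eq_top {a b : L} (h : a ≤ b) : himp a b = ⊤ :=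
  le_antisymm le_top (le_himp.2 (by rwa [top_tmul]))

lemma neg_top : neg (⊤ : L) = ⊥ := top_himp ⊥

lemma himp_mono_right {b c : L} (a : L) (h : b ≤ c) : himp a b ≤ himp a c :=
  le_himp.2 ((tmul_himp_le a b).trans h)

lemma himp_anti_left {a b : L} (c : L) (h : a ≤ b) : himp b c ≤ himp a c :=
  le_himp.2 ((tmul_mono_right (himp b c) h).trans (tmul_himp_le b c))

lemma neg_anti {a b : L} (h : a ≤ b) : neg b ≤ neg a := himp_anti_left ⊥ h

lemma tmul_neg_le (a : L) : tmul a (neg a) ≤ ⊥ := by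
  rw [tmul_comm]; exact tmul_himp_le a ⊥

lemma le_negneg (a : L) : a ≤ neg (neg a) := le_himp.2 (tmul_neg_le a)

lemma curry (a b c : L) : himp a (himp b c) = himp (tmul a b) c := by
  apply le_antisymm
  · refine le_himp.2 ?_
    rw [← tmul_assoc]
    exact (tmul_mono_left b (tmul_himp_le a (himp b c))).trans (tmul_himp_le b c)
  · refine le_himp.2 (le_himp.2 ?_)
    rw [tmul_assoc]
    exact tmul_himp_le (tmul a b) c

lemma le_himp_self (x y : L) : x ≤ himp y x := le_himp.2 (tmul_le_left x y)

/-- The MTL (prelinearity) lemma: `(a ⊓ b) → c ≤ (a → c) ⊔ (b → c)`. -/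
lemma himp_inf_le (a b c : L) : himp (a ⊓ b) c ≤ himp a c ⊔ himp b c := by
  set w := himp (a ⊓ b) c with hw
  have h1 : tmul w (himp a b) ≤ himp a c := by
    refine le_himp.2 ?_
    rw [tmul_assoc]
    refine (tmul_mono_right w ?_).trans (tmul_himp_le (a ⊓ b) c)
    exact le_inf (tmul_le_right _ _) (tmul_himp_le a b)
  have h2 : tmul w (himp b a) ≤ himp b c := by
    refine le_himp.2 ?_
    rw [tmul_assoc]
    refine (tmul_mono_right w ?_).trans (tmul_himp_le (a ⊓ b) c)
    exact le_inf (tmul_himp_le b a) (tmul_le_right _ _)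
  have h3 : himp a b ⊔ himp b a ≤ himp w (himp a c ⊔ himp b c) := by
    refine sup_le (le_himp.2 ?_) (le_himp.2 ?_)
    · rw [tmul_comm]; exact h1.trans le_sup_left
    · rw [tmul_comm]; exact h2.trans le_sup_right
  rw [prelinearity] at h3
  have h4 := le_himp.1 h3
  rwa [top_tmul] at h4

section Ideal

variable {A : Set L} (hA : IsLIIdeal A)

include hA

lemma mem_of_le {x y : L} (h : x ≤ y) (hy : y ∈ A) : x ∈ A := by
  refine hA.2 y x ?_ hy
  rw [himp_eq_top (neg_anti h), neg_top]
  exact hA.1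

lemma negneg_mem {x : L} (hx : x ∈ A) : neg (neg x) ∈ A := by
  refine hA.2 x (neg (neg x)) ?_ hx
  rw [himp_eq_top (le_negneg (neg x)), neg_top]
  exact hA.1

lemma mem_of_negneg_mem {x : L} (hx : neg (neg x) ∈ A) : x ∈ A := by
  refine hA.2 ⊥ x ?_ hA.1
  have : neg (⊥ : L) = ⊤ := himp_eq_top le_rfl
  rwa [this, top_himp]

lemma sup_mem {a b : L} (ha : a ∈ A) (hb : b ∈ A) : a ⊔ b ∈ A := by
  refine hA.2 b (a ⊔ b) ?_ hb
  have key : tmul (a ⊔ b) (tmul (neg a) (neg b)) ≤ ⊥ := by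
    refine le_himp.1 (sup_le (le_himp.2 ?_) (le_himp.2 ?_))
    · exact (tmul_mono_right a (tmul_le_left _ _)).trans (tmul_neg_le a)
    · exact (tmul_mono_right b (tmul_le_right _ _)).trans (tmul_neg_le b)
  have h1 : neg a ≤ himp (neg b) (neg (a ⊔ b)) := by
    refine le_himp.2 (le_himp.2 ?_)
    rwa [tmul_comm]
  exact mem_of_le hA (neg_anti h1) (negneg_mem hA ha)

end Ideal

end MTLAlgebra

/-- An LI-ideal `A` of an MTL-algebra `L` is an ultra LI-ideal iff `A` is a
prime proper LI-ideal and an ILI-ideal. -/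
theorem ultra_iff_prime_proper_and_ILI {L : Type*} [MTLAlgebra L] (A : Set L)
    (hA : IsLIIdeal A) :
    (∀ x : L, x ∈ A ↔ neg x ∉ A) ↔
      ((A ≠ Set.univ ∧ ∀ x y : L, x ⊓ y ∈ A → x ∈ A ∨ y ∈ A) ∧
        (∀ x y : L, neg (himp x (neg (himp y x))) ∈ A → x ∈ A)) := by
  constructor
  · intro hU
    have htop : (⊤ : L) ∉ A := by
      intro h
      exact (hU ⊤).1 h (by rw [neg_top]; exact hA.1)
    refine ⟨⟨?_, ?_⟩, ?_⟩
    · intro h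
      exact htop (h ▸ Set.mem_univ ⊤)
    · -- prime
      intro x y hxy
      by_contra hc
      push_neg at hc
      obtain ⟨hx, hy⟩ := hc
      have hx' : neg x ∈ A := by
        by_contra h; exact hx ((hU x).2 h)
      have hy' : neg y ∈ A := by
        by_contra h; exact hy ((hU y).2 h)
      have hsup : neg x ⊔ neg y ∈ A := sup_mem hA hx' hy'
      have hneg : neg (x ⊓ y) ∈ A :=
        mem_of_le hA (himp_inf_le x y ⊥) hsup
      exact (hU (x ⊓ y)).1 hxy hneg
    · -- ILI
      intro x y h
      -- `(x → x')' ≤ (x → (y→x)')'` since `x ≤ y→x`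
      have h1 : neg (himp x (neg x)) ∈ A := by
        refine mem_of_le hA (neg_anti ?_) h
        exact himp_mono_right x (neg_anti (le_himp_self x y))
      -- `x → x' ≤ x'' → x'`
      have h2 : himp x (neg x) ≤ himp (neg (neg x)) (neg x) := by
        refine le_himp.2 (le_himp.2 ?_)
        have e : tmul (tmul (himp x (neg x)) (neg (neg x))) x
            = tmul (neg (neg x)) (tmul (himp x (neg x)) x) := by
          rw [tmul_comm (himp x (neg x)) (neg (neg x)), tmul_assoc]
        rw [e]
        calc tmul (neg (neg x)) (tmul (himp x (neg x)) x)
            ≤ tmul (neg (neg x)) (neg x) :=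
              tmul_mono_right _ (tmul_himp_le x (neg x))
          _ ≤ ⊥ := tmul_himp_le (neg x) ⊥
      have h3 : neg (himp (neg (neg x)) (neg x)) ∈ A :=
        mem_of_le hA (neg_anti h2) h1
      by_cases hx' : neg x ∈ A
      · exact hA.2 (neg x) x h3 hx'
      · exact (hU x).2 hx'
  · rintro ⟨⟨hproper, hprime⟩, hILI⟩ x
    constructor
    · intro hx hx'
      apply hproper
      ext y
      simp only [Set.mem_univ, iff_true]
      refine hA.2 x y ?_ hx
      have h1 : neg (neg x) ≤ himp (neg x) (neg y) :=
        le_himp.2 ((tmul_himp_le (neg x) ⊥).trans bot_le)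
      exact mem_of_le hA ((neg_anti h1).trans (neg_anti (le_negneg x))) hx'
    · intro hx'
      have hmem : x ⊓ neg x ∈ A := by
        refine hILI (x ⊓ neg x) ⊤ ?_
        have hsq : tmul (x ⊓ neg x) (x ⊓ neg x) = ⊥ := by
          refine le_antisymm ?_ bot_le
          calc tmul (x ⊓ neg x) (x ⊓ neg x)
              ≤ tmul x (neg x) := by
                exact (tmul_mono_left _ inf_le_left).trans
                  (tmul_mono_right x inf_le_right)
            _ ≤ ⊥ := tmul_neg_le x
        have : neg (himp (x ⊓ neg x) (neg (himp ⊤ (x ⊓ neg x)))) = ⊥ := by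
          rw [MTLAlgebra.top_himp]
          show neg (himp (x ⊓ neg x) (himp (x ⊓ neg x) ⊥)) = ⊥
          rw [curry, hsq, himp_eq_top (le_refl (⊥ : L)), neg_top]
        rw [this]
        exact hA.1
      rcases hprime x (neg x) hmem with h | h
      · exact h
      · exact absurd h hx'
end

section
/- Let A be an LI-ideal of an MTL-algebra L. Then A is an ultra LI-ideal of L if and only if A is a proper obstinate LI-ideal of L. -/
open MTLAlgebra

section Aux

variable {L : Type*} [MTLAlgebra L]

lemma tmul_mono_left' {a b : L} (c : L) (h : a ≤ b) : tmul a c ≤ tmul b c := by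
  have hb : b ≤ himp c (tmul b c) := (adjoint c (tmul b c) b).mpr le_rfl
  exact (adjoint c (tmul b c) a).mp (h.trans hb)

lemma tmul_mono_right' {a b : L} (c : L) (h : a ≤ b) : tmul c a ≤ tmul c b := by
  rw [tmul_comm c a, tmul_comm c b]; exact tmul_mono_left' c h

lemma himp_anti' {a b : L} (c : L) (h : a ≤ b) : himp b c ≤ himp a c := by
  refine (adjoint a c (himp b c)).mpr ?_
  calc tmul (himp b c) a ≤ tmul (himp b c) b := tmul_mono_right' _ h
    _ ≤ c := (adjoint b c (himp b c)).mp le_rfl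

lemma himp_mono' {a b : L} (c : L) (h : a ≤ b) : himp c a ≤ himp c b :=
  (adjoint c b (himp c a)).mpr (((adjoint c a (himp c a)).mp le_rfl).trans h)

lemma neg_anti' {a b : L} (h : a ≤ b) : neg b ≤ neg a := himp_anti' ⊥ h

lemma himp_eq_top' {a b : L} (h : a ≤ b) : himp a b = ⊤ :=
  le_antisymm le_top ((adjoint a b ⊤).mpr (by rw [top_tmul]; exact h))

lemma neg_top' : neg (⊤ : L) = ⊥ := by
  have : neg (⊤ : L) ≤ ⊥ := by
    have := (adjoint (⊤ : L) ⊥ (neg ⊤)).mp le_rfl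
    rwa [tmul_comm, top_tmul] at this
  exact le_antisymm this bot_le

lemma himp_top_left' (x : L) : himp (⊤ : L) x = x := by
  apply le_antisymm
  · have := (adjoint (⊤ : L) x (himp ⊤ x)).mp le_rfl
    rwa [tmul_comm, top_tmul] at this
  · exact (adjoint (⊤ : L) x x).mpr (by rw [tmul_comm, top_tmul])

lemma le_himp_self' (x y : L) : y ≤ himp x y :=
  (adjoint x y y).mpr (by
    calc tmul y x ≤ tmul y ⊤ := tmul_mono_right' y le_top
      _ = y := by rw [tmul_comm, top_tmul])

lemma tmul_neg_le_bot' (x : L) : tmul x (neg x) ≤ ⊥ := by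
  have := (adjoint x ⊥ (neg x)).mp le_rfl
  rwa [tmul_comm] at this

lemma mem_of_le' {A : Set L} (hA : IsLIIdeal A) {x y : L} (h : y ≤ x) (hx : x ∈ A) :
    y ∈ A := by
  refine hA.2 x y ?_ hx
  rw [himp_eq_top' (neg_anti' h), neg_top']
  exact hA.1

lemma eq_univ_of_top_mem' {A : Set L} (hA : IsLIIdeal A) (ht : (⊤ : L) ∈ A) :
    A = Set.univ := by
  refine Set.eq_univ_iff_forall.mpr fun y => hA.2 ⊤ y ?_ ht
  rw [neg_top', himp_eq_top' bot_le, neg_top']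
  exact hA.1

end Aux

/-- An LI-ideal `A` of an MTL-algebra `L` is an ultra LI-ideal iff `A` is a
proper obstinate LI-ideal. -/
theorem ultra_iff_proper_obstinate {L : Type*} [MTLAlgebra L] (A : Set L)
    (hA : IsLIIdeal A) :
    (∀ x : L, x ∈ A ↔ neg x ∉ A) ↔
      (A ≠ Set.univ ∧ ∀ x y : L, x ∉ A → y ∉ A →
        neg (himp x y) ∈ A ∧ neg (himp y x) ∈ A) := by
  constructor
  · intro h
    constructor
    · intro heq
      have ht : (⊤ : L) ∈ A := heq ▸ Set.mem_univ _
      exact ((h ⊥).mp hA.1) (by rwa [show neg (⊥ : L) = ⊤ from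
        le_antisymm le_top ((adjoint ⊥ ⊥ ⊤).mpr (by rw [top_tmul]))])
    · intro x y hx hy
      have hx' : neg x ∈ A := not_not.mp fun hn => hx ((h x).mpr hn)
      have hy' : neg y ∈ A := not_not.mp fun hn => hy ((h y).mpr hn)
      exact ⟨mem_of_le' hA (neg_anti' (le_himp_self' x y)) hy',
        mem_of_le' hA (neg_anti' (le_himp_self' y x)) hx'⟩
  · rintro ⟨hproper, hobs⟩ x
    constructor
    · intro hx hx'
      apply hproper
      refine Set.eq_univ_iff_forall.mpr fun y => hA.2 x y ?_ hx
      have hle : x ≤ himp (neg x) (neg y) :=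
        (adjoint (neg x) (neg y) x).mpr ((tmul_neg_le_bot' x).trans bot_le)
      exact mem_of_le' hA (neg_anti' hle) hx'
    · intro hx'
      by_contra hx
      have ht : (⊤ : L) ∉ A := fun ht => hproper (eq_univ_of_top_mem' hA ht)
      have := (hobs x ⊤ hx ht).2
      rw [himp_top_left'] at this
      exact hx' this
end
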